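/- arXiv:2212.06401 — 3 statements merged into one kernel-verified Lean document; each statement's English description precedes it below -/
import Mathlib

section
/- Consider a definably complete locally o-minimal expansion 𝓕 = (F, <, +, ·, 0, 1, …) of an ordered field. Let X be a definable closed set and E a definable equivalence relation on X which is closed in X × X. Let K be a definable closed subset of X, set E_K = E ∩ (K × K), and let p₁, p₂ : E → X be the restrictions to E of the two projections X × X → X. Assume that the restriction of p₁ to p₂⁻¹(K) is definably identifying (onto X). Then a definable quotient of X by E exists if and only if a definable quotient of K by E_K exists; moreover, if f : X → Y is a definable quotient of X by E, then the restriction f|_K : K → Y is a definable quotient of K by E_K. -/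
open FirstOrder Set Topology Filter

section Defs

variable {F : Type*}

/-- A subset of `F^α` is definable (with parameters) in the structure. -/
def IsDef (L : FirstOrder.Language) [L.Structure F] {α : Type} (s : Set (α → F)) : Prop :=
  Set.Definable (Set.univ : Set F) L s

/-- The structure is an expansion of the ordered field `F`: the order, addition and
multiplication are definable. -/
def IsOrderedFieldExpansion (L : FirstOrder.Language) [L.Structure F]
    [Field F] [LinearOrder F] [IsStrictOrderedRing F] : Prop :=
  IsDef L {v : Fin 2 → F | v 0 < v 1} ∧
  IsDef L {v : Fin 3 → F | v 0 + v 1 = v 2} ∧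
  IsDef L {v : Fin 3 → F | v 0 * v 1 = v 2}

/-- The structure is an expansion of the ordered (additive) group `F`. -/
def IsOrderedGroupExpansion (L : FirstOrder.Language) [L.Structure F]
    [AddCommGroup F] [LinearOrder F] [IsOrderedAddMonoid F] : Prop :=
  IsDef L {v : Fin 2 → F | v 0 < v 1} ∧
  IsDef L {v : Fin 3 → F | v 0 + v 1 = v 2}

/-- The structure is an expansion of the dense linear order `F`. -/
def IsOrderExpansion (L : FirstOrder.Language) [L.Structure F] [LinearOrder F] : Prop :=
  IsDef L {v : Fin 2 → F | v 0 < v 1}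

/-- Definable completeness: every nonempty definable subset of `F` which is bounded
above (below) has a supremum (infimum) in `F`; equivalently every definable subset of `F`
has a supremum and an infimum in `F ∪ {±∞}`. -/
def DefinablyComplete (L : FirstOrder.Language) [L.Structure F] [LinearOrder F] : Prop :=
  ∀ s : Set F, IsDef L {v : Fin 1 → F | v 0 ∈ s} → s.Nonempty →
    (BddAbove s → ∃ a, IsLUB s a) ∧ (BddBelow s → ∃ a, IsGLB s a)

/-- Local o-minimality: every definable subset of `F` is, near each point, a finite union
of points and open intervals. -/
def LocallyOMinimal (L : FirstOrder.Language) [L.Structure F] [LinearOrder F] : Prop :=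
  ∀ s : Set F, IsDef L {v : Fin 1 → F | v 0 ∈ s} → ∀ a : F,
    ∃ b c : F, b < a ∧ a < c ∧ ∃ (P : Finset F) (I : Finset (F × F)),
      s ∩ Set.Ioo b c = ↑P ∪ ⋃ p ∈ I, Set.Ioo p.1 p.2

/-- A subset of `F^α` is bounded if it is contained in a box. -/
def IsBdd [LE F] {α : Type} (s : Set (α → F)) : Prop :=
  ∃ a b : F, ∀ v ∈ s, ∀ i, a ≤ v i ∧ v i ≤ b

/-- `s` is closed in the subspace `Y` (for `s ⊆ Y`). -/
def ClosedIn {X : Type*} [TopologicalSpace X] (Y s : Set X) : Prop :=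
  Y ∩ closure s ⊆ s

/-- `s` is open in the subspace `Y`. -/
def OpenIn {X : Type*} [TopologicalSpace X] (Y s : Set X) : Prop :=
  ∃ V, IsOpen V ∧ s = Y ∩ V

/-- A map `f` defined on `X ⊆ F^α` with values in `F^β` is definable: its graph is a
definable subset of `F^(α ⊕ β)`. -/
def IsDefFunOn (L : FirstOrder.Language) [L.Structure F] {α β : Type}
    (X : Set (α → F)) (f : (α → F) → (β → F)) : Prop :=
  IsDef L {v : α ⊕ β → F | (v ∘ Sum.inl) ∈ X ∧ f (v ∘ Sum.inl) = v ∘ Sum.inr}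

/-- An `F`-valued map defined on `X ⊆ F^α` is definable. -/
def IsDefFunOn₁ (L : FirstOrder.Language) [L.Structure F] {α : Type}
    (X : Set (α → F)) (f : (α → F) → F) : Prop :=
  IsDef L {v : α ⊕ Unit → F | (v ∘ Sum.inl) ∈ X ∧ f (v ∘ Sum.inl) = v (Sum.inr ())}

/-- `f : X → Y` is definably proper: preimages of definable closed bounded subsets of `Y`
are closed and bounded. -/
def IsDefProper (L : FirstOrder.Language) [L.Structure F] [LE F] [TopologicalSpace F]
    {α β : Type} (X : Set (α → F)) (Y : Set (β → F)) (f : (α → F) → (β → F)) : Prop :=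
  ∀ K : Set (β → F), IsDef L K → K ⊆ Y → IsClosed K → IsBdd K →
    IsClosed {x | x ∈ X ∧ f x ∈ K} ∧ IsBdd {x | x ∈ X ∧ f x ∈ K}

/-- `f : X → Y` is definably identifying: it is surjective onto `Y` and a definable subset
`K` of `Y` is closed in `Y` whenever `f⁻¹(K)` is closed in `X`. -/
def IsDefIdentifying (L : FirstOrder.Language) [L.Structure F] [TopologicalSpace F]
    {α β : Type} (X : Set (α → F)) (Y : Set (β → F)) (f : (α → F) → (β → F)) : Prop :=
  (∀ y ∈ Y, ∃ x ∈ X, f x = y) ∧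
  ∀ K : Set (β → F), IsDef L K → K ⊆ Y →
    ClosedIn X {x | x ∈ X ∧ f x ∈ K} → ClosedIn Y K

/-- A definable curve in `X` defined on the interval `(0, ε)`. -/
def IsDefCurve (L : FirstOrder.Language) [L.Structure F] [LinearOrder F] [Zero F]
    [TopologicalSpace F] {α : Type} (ε : F) (X : Set (α → F)) (γ : F → (α → F)) : Prop :=
  IsDef L {v : Unit ⊕ α → F |
      v (Sum.inl ()) ∈ Set.Ioo 0 ε ∧ γ (v (Sum.inl ())) = v ∘ Sum.inr} ∧
  ContinuousOn γ (Set.Ioo 0 ε) ∧ MapsTo γ (Set.Ioo 0 ε) X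

/-- The curve `γ : (0,ε) → F^α` tends to `x` as `t → 0⁺`. -/
def CurveTendsto [LinearOrder F] [Zero F] [TopologicalSpace F] {α : Type}
    (ε : F) (γ : F → (α → F)) (x : α → F) : Prop :=
  Filter.Tendsto γ (nhdsWithin 0 (Set.Ioo 0 ε)) (nhds x)

/-- The curve `γ : (0,ε) → F^α` is completable in `X`. -/
def Completable [LinearOrder F] [Zero F] [TopologicalSpace F] {α : Type}
    (ε : F) (X : Set (α → F)) (γ : F → (α → F)) : Prop :=
  ∃ x ∈ X, CurveTendsto ε γ x

/-- `E ⊆ F^(α⊕α)` is a definable equivalence relation on `X ⊆ F^α`; the pair `(x, y)` is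
encoded as `Sum.elim x y`. -/
def IsDefEquivOn (L : FirstOrder.Language) [L.Structure F] {α : Type}
    (X : Set (α → F)) (E : Set (α ⊕ α → F)) : Prop :=
  IsDef L E ∧
  (∀ v ∈ E, v ∘ Sum.inl ∈ X ∧ v ∘ Sum.inr ∈ X) ∧
  (∀ x ∈ X, Sum.elim x x ∈ E) ∧
  (∀ x y : α → F, Sum.elim x y ∈ E → Sum.elim y x ∈ E) ∧
  (∀ x y z : α → F, Sum.elim x y ∈ E → Sum.elim y z ∈ E → Sum.elim x z ∈ E)

/-- `f : X → Y` is a definable quotient of `X` by the definable equivalence relation `E`: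
a definable, continuous, definably identifying map onto the definable set `Y` whose fibers
are exactly the equivalence classes of `E`. -/
def IsDefQuotient (L : FirstOrder.Language) [L.Structure F] [TopologicalSpace F]
    {α β : Type} (X : Set (α → F)) (E : Set (α ⊕ α → F))
    (Y : Set (β → F)) (f : (α → F) → (β → F)) : Prop :=
  IsDef L Y ∧ IsDefFunOn L X f ∧ ContinuousOn f X ∧ MapsTo f X Y ∧
  IsDefIdentifying L X Y f ∧
  ∀ x ∈ X, ∀ x' ∈ X, (f x = f x' ↔ Sum.elim x x' ∈ E)

/-- A definable group: a definable set `G ⊆ F^κ` with definable continuous group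
operations. -/
structure IsDefGroup (L : FirstOrder.Language) [L.Structure F] [TopologicalSpace F]
    {κ : Type} (G : Set (κ → F)) (mul : (κ → F) → (κ → F) → (κ → F))
    (inv : (κ → F) → (κ → F)) (e : κ → F) : Prop where
  defG : IsDef L G
  defMul : IsDef L {v : (κ ⊕ κ) ⊕ κ → F |
    (v ∘ Sum.inl ∘ Sum.inl) ∈ G ∧ (v ∘ Sum.inl ∘ Sum.inr) ∈ G ∧
    mul (v ∘ Sum.inl ∘ Sum.inl) (v ∘ Sum.inl ∘ Sum.inr) = v ∘ Sum.inr}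
  defInv : IsDef L {v : κ ⊕ κ → F | (v ∘ Sum.inl) ∈ G ∧ inv (v ∘ Sum.inl) = v ∘ Sum.inr}
  contMul : ContinuousOn (fun p : (κ → F) × (κ → F) => mul p.1 p.2) (G ×ˢ G)
  contInv : ContinuousOn inv G
  e_mem : e ∈ G
  mul_mem : ∀ g ∈ G, ∀ h ∈ G, mul g h ∈ G
  inv_mem : ∀ g ∈ G, inv g ∈ G
  mul_assoc' : ∀ g ∈ G, ∀ h ∈ G, ∀ k ∈ G, mul (mul g h) k = mul g (mul h k)
  one_mul' : ∀ g ∈ G, mul e g = g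
  mul_one' : ∀ g ∈ G, mul g e = g
  inv_mul' : ∀ g ∈ G, mul (inv g) g = e
  mul_inv' : ∀ g ∈ G, mul g (inv g) = e

/-- A definable (continuous) action of the definable group `G` on the definable set `X`,
making `X` a definable `G`-set. -/
structure IsDefAction (L : FirstOrder.Language) [L.Structure F] [TopologicalSpace F]
    {κ μ : Type} (G : Set (κ → F)) (mul : (κ → F) → (κ → F) → (κ → F)) (e : κ → F)
    (X : Set (μ → F)) (act : (κ → F) → (μ → F) → (μ → F)) : Prop where
  defAct : IsDef L {v : (κ ⊕ μ) ⊕ μ → F |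
    (v ∘ Sum.inl ∘ Sum.inl) ∈ G ∧ (v ∘ Sum.inl ∘ Sum.inr) ∈ X ∧
    act (v ∘ Sum.inl ∘ Sum.inl) (v ∘ Sum.inl ∘ Sum.inr) = v ∘ Sum.inr}
  contAct : ContinuousOn (fun p : (κ → F) × (μ → F) => act p.1 p.2) (G ×ˢ X)
  act_mem : ∀ g ∈ G, ∀ x ∈ X, act g x ∈ X
  act_e : ∀ x ∈ X, act e x = x
  act_mul : ∀ g ∈ G, ∀ h ∈ G, ∀ x ∈ X, act (mul g h) x = act g (act h x)

end Defs


/-! Since `p₁` maps `p₂⁻¹(K)` onto `X`, every point of `X` is `E`-equivalent to a point of `K`.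
Hence a quotient of `X` restricts to a quotient of `K`, and a quotient `g` of `K` extends to
`X` by `x ↦ g k` for any `k ∈ K` equivalent to `x`. The topological content of both directions
is one observation: if `S ⊆ X` is definable and `E`-saturated and `S ∩ K` is closed, then
`p₁⁻¹(S) ∩ p₂⁻¹(K) = p₂⁻¹(S ∩ K) ∩ E` is closed in `p₂⁻¹(K)`, so `S` is closed in `X` because
`p₁` is identifying there. Continuity of the extension follows as well, since continuity into
`F^n` can be tested on definable closed sets (complements of open half-spaces `{y | c < y i}`). -/

section Definability

variable {F : Type*} {L : FirstOrder.Language} [L.Structure F]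

lemma isDef_setOf_lt_apply [LT F] (hlt : IsDef L {v : Fin 2 → F | v 0 < v 1})
    {α : Type} (c : F) (i : α) : IsDef L {y : α → F | c < y i} := by
  refine hlt.preimage_map (F := fun y => ![c, y i]) fun j => ?_
  fin_cases j
  · simpa using L.definableFun_const α (mem_univ c)
  · simpa using DefinableFun.proj L

lemma isDef_setOf_apply_lt [LT F] (hlt : IsDef L {v : Fin 2 → F | v 0 < v 1})
    {α : Type} (i : α) (c : F) : IsDef L {y : α → F | y i < c} := by
  refine hlt.preimage_map (F := fun y => ![y i, c]) fun j => ?_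
  fin_cases j
  · simpa using DefinableFun.proj L
  · simpa using L.definableFun_const α (mem_univ c)

lemma isDef_relComp {α β γ : Type} [Finite β] {R : Set (α ⊕ β → F)} {S : Set (β ⊕ γ → F)}
    (hR : IsDef L R) (hS : IsDef L S) :
    IsDef L {v : α ⊕ γ → F | ∃ y, Sum.elim (v ∘ Sum.inl) y ∈ R ∧ Sum.elim y (v ∘ Sum.inr) ∈ S} := by
  have hRS : IsDef L {w : (α ⊕ γ) ⊕ β → F |
      w ∘ Sum.elim (Sum.inl ∘ Sum.inl) Sum.inr ∈ R ∧
        w ∘ Sum.elim Sum.inr (Sum.inl ∘ Sum.inr) ∈ S} :=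
    (hR.preimage_comp _).inter (hS.preimage_comp _)
  show Definable univ L _
  convert hRS.exists_of_finite using 1
  ext v
  simp only [mem_ofPred_eq, Sum.comp_elim, ← Function.comp_assoc, Sum.elim_comp_inl,
    Sum.elim_comp_inr]

lemma IsDefFunOn.mono {α β : Type} {X K : Set (α → F)} {f : (α → F) → (β → F)}
    (hf : IsDefFunOn L X f) (hK : IsDef L K) (hKX : K ⊆ X) : IsDefFunOn L K f := by
  show Definable univ L _
  convert hf.inter (hK.preimage_comp Sum.inl) using 1
  ext v
  exact ⟨fun h => ⟨⟨hKX h.1, h.2⟩, h.1⟩, fun h => ⟨h.2, h.1.2⟩⟩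

lemma IsDefFunOn.isDef_preimage {α β : Type} [Finite β] {X : Set (α → F)}
    {f : (α → F) → (β → F)} (hf : IsDefFunOn L X f) {C : Set (β → F)} (hC : IsDef L C) :
    IsDef L {x | x ∈ X ∧ f x ∈ C} := by
  show Definable univ L _
  convert (hf.inter (hC.preimage_comp Sum.inr)).exists_of_finite using 1
  ext x
  simp only [mem_ofPred_eq, mem_inter_iff, mem_preimage, Sum.elim_comp_inl, Sum.elim_comp_inr]
  exact ⟨fun h => ⟨f x, ⟨h.1, rfl⟩, h.2⟩, fun ⟨_, ⟨hx, hy⟩, hyC⟩ => ⟨hx, hy ▸ hyC⟩⟩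

end Definability

section Topology

variable {Z : Type*} [TopologicalSpace Z]

lemma ClosedIn.isClosed {Y s : Set Z} (h : ClosedIn Y s) (hY : IsClosed Y) (hs : s ⊆ Y) :
    IsClosed s :=
  isClosed_of_closure_subset fun _ hx => h ⟨hY.closure_subset_iff.2 hs hx, hx⟩

lemma ClosedIn.inter_left {X S K : Set Z} (h : ClosedIn X S) (hKX : K ⊆ X) :
    ClosedIn K (K ∩ S) :=
  fun _ ⟨hxK, hx⟩ => ⟨hxK, h ⟨hKX hxK, closure_mono inter_subset_right hx⟩⟩

lemma ClosedIn.eventually_mem_compl {W : Type*} {X : Set Z} {f : Z → W} {C : Set W}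
    (h : ClosedIn X {x | x ∈ X ∧ f x ∈ C}) {x₀ : Z} (hx₀ : x₀ ∈ X) (hfx₀ : f x₀ ∉ C) :
    ∀ᶠ x in 𝓝[X] x₀, f x ∉ C := by
  have hx₀S : x₀ ∉ closure {x | x ∈ X ∧ f x ∈ C} := fun hmem => hfx₀ (h ⟨hx₀, hmem⟩).2
  filter_upwards [nhdsWithin_le_nhds (isClosed_closure.isOpen_compl.mem_nhds hx₀S),
    self_mem_nhdsWithin] with x hxS hxX hx
  exact hxS (subset_closure ⟨hxX, hx⟩)

end Topology

lemma continuousOn_of_closedIn_preimage {F : Type*} [LinearOrder F] [TopologicalSpace F]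
    [OrderTopology F] {L : FirstOrder.Language} [L.Structure F]
    (hlt : IsDef L {v : Fin 2 → F | v 0 < v 1}) {α β : Type} {X : Set (α → F)}
    {f : (α → F) → (β → F)}
    (h : ∀ C : Set (β → F), IsDef L C → IsClosed C → ClosedIn X {x | x ∈ X ∧ f x ∈ C}) :
    ContinuousOn f X := by
  intro x₀ hx₀
  refine tendsto_pi_nhds.2 fun i => tendsto_order.2 ⟨fun c hc => ?_, fun d hd => ?_⟩
  · simpa using (h _ (isDef_setOf_lt_apply hlt c i).compl
      (isOpen_lt continuous_const (continuous_apply i)).isClosed_compl).eventually_mem_compl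
        hx₀ (not_not.2 hc)
  · simpa using (h _ (isDef_setOf_apply_lt hlt i d).compl
      (isOpen_lt (continuous_apply i) continuous_const).isClosed_compl).eventually_mem_compl
        hx₀ (not_not.2 hd)

section Quotient

variable {F : Type*} [TopologicalSpace F] {L : FirstOrder.Language} [L.Structure F]
  {α : Type} {X K : Set (α → F)} {E : Set (α ⊕ α → F)}

lemma exists_mem_rel_of_isDefIdentifying
    (hq : IsDefIdentifying L {v | v ∈ E ∧ v ∘ Sum.inr ∈ K} X (fun v => v ∘ Sum.inl))
    {x : α → F} (hx : x ∈ X) : ∃ k ∈ K, Sum.elim x k ∈ E := by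
  obtain ⟨v, ⟨hvE, hvK⟩, rfl⟩ := hq.1 x hx
  exact ⟨v ∘ Sum.inr, hvK, by rwa [Sum.elim_comp_inl_inr]⟩

lemma closedIn_preimage_of_isDefIdentifying {β : Type} {h : (α → F) → (β → F)}
    {C : Set (β → F)} (hE : IsDefEquivOn L X E)
    (hq : IsDefIdentifying L {v | v ∈ E ∧ v ∘ Sum.inr ∈ K} X (fun v => v ∘ Sum.inl))
    (hh : ∀ v ∈ E, h (v ∘ Sum.inl) = h (v ∘ Sum.inr))
    (hdef : IsDef L {x | x ∈ X ∧ h x ∈ C}) (hK : IsClosed {k | k ∈ K ∧ h k ∈ C}) :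
    ClosedIn X {x | x ∈ X ∧ h x ∈ C} := by
  refine hq.2 _ hdef (fun _ hx => hx.1) ?_
  have hsub : {v | v ∈ {v | v ∈ E ∧ v ∘ Sum.inr ∈ K} ∧ v ∘ Sum.inl ∈ {x | x ∈ X ∧ h x ∈ C}}
      ⊆ (fun v : α ⊕ α → F => v ∘ Sum.inr) ⁻¹' {k | k ∈ K ∧ h k ∈ C} :=
    fun v ⟨⟨hvE, hvK⟩, _, hvC⟩ => ⟨hvK, hh v hvE ▸ hvC⟩
  have hclosed : IsClosed ((fun v : α ⊕ α → F => v ∘ Sum.inr) ⁻¹' {k | k ∈ K ∧ h k ∈ C}) :=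
    hK.preimage (continuous_pi fun _ => continuous_apply _)
  rintro v ⟨⟨hvE, hvK⟩, hv⟩
  have hvC := (hclosed.closure_subset (closure_mono hsub hv)).2
  exact ⟨⟨hvE, hvK⟩, (hE.2.1 v hvE).1, (hh v hvE).symm ▸ hvC⟩

variable {β : Type} [Finite β] {Y : Set (β → F)}

theorem IsDefQuotient.restrict (hE : IsDefEquivOn L X E) (hKdef : IsDef L K) (hKX : K ⊆ X)
    (hKclosed : IsClosed K)
    (hq : IsDefIdentifying L {v | v ∈ E ∧ v ∘ Sum.inr ∈ K} X (fun v => v ∘ Sum.inl))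
    {f : (α → F) → (β → F)} (hf : IsDefQuotient L X E Y f) :
    IsDefQuotient L K (E ∩ {v | v ∘ Sum.inl ∈ K ∧ v ∘ Sum.inr ∈ K}) Y f := by
  obtain ⟨hYdef, hfdef, hfcont, hfmaps, ⟨hfsurj, hfident⟩, hfib⟩ := hf
  have hfE : ∀ v ∈ E, f (v ∘ Sum.inl) = f (v ∘ Sum.inr) := fun v hv =>
    (hfib _ (hE.2.1 v hv).1 _ (hE.2.1 v hv).2).2 (by rwa [Sum.elim_comp_inl_inr])
  refine ⟨hYdef, hfdef.mono hKdef hKX, hfcont.mono hKX, hfmaps.mono_left hKX,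
    ⟨fun y hy => ?_, fun C hCdef hCY hCK => ?_⟩, fun x hx x' hx' => ?_⟩
  · obtain ⟨x, hx, rfl⟩ := hfsurj y hy
    obtain ⟨k, hk, hxk⟩ := exists_mem_rel_of_isDefIdentifying hq hx
    exact ⟨k, hk, by simpa using (hfE _ hxk).symm⟩
  · exact hfident C hCdef hCY <| closedIn_preimage_of_isDefIdentifying hE hq hfE
      (hfdef.isDef_preimage hCdef) (hCK.isClosed hKclosed fun _ hk => hk.1)
  · simp [hfib x (hKX hx) x' (hKX hx'), hx, hx']

end Quotient

section Extension

variable {F : Type*} {L : FirstOrder.Language} [L.Structure F] {α β : Type}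
  {X K : Set (α → F)} {E : Set (α ⊕ α → F)}

lemma IsDefFunOn.of_eq_of_rel [Finite α] (hXdef : IsDef L X) (hEdef : IsDef L E)
    {g : (α → F) → (β → F)} (hg : IsDefFunOn L K g) {f : (α → F) → (β → F)}
    (hex : ∀ x ∈ X, ∃ k ∈ K, Sum.elim x k ∈ E)
    (hfg : ∀ x ∈ X, ∀ k ∈ K, Sum.elim x k ∈ E → f x = g k) : IsDefFunOn L X f := by
  show Definable univ L _
  convert (hXdef.preimage_comp Sum.inl).inter (isDef_relComp hEdef hg) using 1
  ext v
  simp only [mem_ofPred_eq, mem_inter_iff, mem_preimage, Sum.elim_comp_inl, Sum.elim_comp_inr]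
  refine ⟨fun ⟨hx, hv⟩ => ?_, fun ⟨hx, k, hxk, hk, hv⟩ => ⟨hx, (hfg _ hx k hk hxk).trans hv⟩⟩
  obtain ⟨k, hk, hxk⟩ := hex _ hx
  exact ⟨hx, k, hxk, hk, (hfg _ hx k hk hxk).symm.trans hv⟩

variable [TopologicalSpace F] {Y : Set (β → F)}

theorem IsDefQuotient.extend [LinearOrder F] [OrderTopology F] [Finite α] [Finite β]
    (hlt : IsDef L {v : Fin 2 → F | v 0 < v 1}) (hXdef : IsDef L X) (hE : IsDefEquivOn L X E)
    (hKX : K ⊆ X) (hKclosed : IsClosed K)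
    (hq : IsDefIdentifying L {v | v ∈ E ∧ v ∘ Sum.inr ∈ K} X (fun v => v ∘ Sum.inl))
    {r : (α → F) → (α → F)} (hrK : ∀ x ∈ X, r x ∈ K) (hrE : ∀ x ∈ X, Sum.elim x (r x) ∈ E)
    {g : (α → F) → (β → F)}
    (hg : IsDefQuotient L K (E ∩ {v | v ∘ Sum.inl ∈ K ∧ v ∘ Sum.inr ∈ K}) Y g) :
    IsDefQuotient L X E Y (fun x => g (r x)) := by
  have ⟨hEdef, hEX, hErefl, hEsymm, hEtrans⟩ := hE
  obtain ⟨hYdef, hgdef, hgcont, hgmaps, ⟨hgsurj, hgident⟩, hgfib⟩ := hg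
  have hgfib' : ∀ k ∈ K, ∀ k' ∈ K, g k = g k' ↔ Sum.elim k k' ∈ E := fun k hk k' hk' => by
    simp [hgfib k hk k' hk', hk, hk']
  have hgr : ∀ x ∈ X, ∀ k ∈ K, Sum.elim x k ∈ E → g (r x) = g k := fun x hx k hk hxk =>
    (hgfib' _ (hrK x hx) _ hk).2 (hEtrans _ _ _ (hEsymm _ _ (hrE x hx)) hxk)
  have hgrK : ∀ k ∈ K, g (r k) = g k := fun k hk => hgr k (hKX hk) k hk (hErefl k (hKX hk))
  have hfib : ∀ x ∈ X, ∀ x' ∈ X, g (r x) = g (r x') ↔ Sum.elim x x' ∈ E := by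
    intro x hx x' hx'
    rw [hgfib' _ (hrK x hx) _ (hrK x' hx')]
    exact ⟨fun h => hEtrans _ _ _ (hrE x hx) (hEtrans _ _ _ h (hEsymm _ _ (hrE x' hx'))),
      fun h => hEtrans _ _ _ (hEsymm _ _ (hrE x hx)) (hEtrans _ _ _ h (hrE x' hx'))⟩
  have hfE : ∀ v ∈ E, g (r (v ∘ Sum.inl)) = g (r (v ∘ Sum.inr)) := fun v hv =>
    (hfib _ (hEX v hv).1 _ (hEX v hv).2).2 (by rwa [Sum.elim_comp_inl_inr])
  have hfdef : IsDefFunOn L X (fun x => g (r x)) :=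
    .of_eq_of_rel hXdef hEdef hgdef (fun x hx => ⟨r x, hrK x hx, hrE x hx⟩) hgr
  have hpre : ∀ C : Set (β → F), {k | k ∈ K ∧ g (r k) ∈ C} = {k | k ∈ K ∧ g k ∈ C} := fun C => by
    ext k
    exact and_congr_right fun hk => by rw [hgrK k hk]
  refine ⟨hYdef, hfdef, ?_, fun x hx => hgmaps (hrK x hx),
    ⟨fun y hy => ?_, fun C hCdef hCY hCX => ?_⟩, hfib⟩
  · refine continuousOn_of_closedIn_preimage hlt fun C hCdef hCclosed => ?_
    refine closedIn_preimage_of_isDefIdentifying hE hq hfE (hfdef.isDef_preimage hCdef) ?_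
    simpa [hpre, inter_def] using hgcont.preimage_isClosed_of_isClosed hKclosed hCclosed
  · obtain ⟨k, hk, rfl⟩ := hgsurj y hy
    exact ⟨k, hKX hk, hgrK k hk⟩
  · refine hgident C hCdef hCY ?_
    rw [← hpre]
    convert hCX.inter_left hKX using 1
    ext k
    exact ⟨fun ⟨hk, hC⟩ => ⟨hk, hKX hk, hC⟩, fun ⟨hk, _, hC⟩ => ⟨hk, hC⟩⟩

end Extension

theorem statement_7_general
    {F : Type*} [Field F] [LinearOrder F] [IsStrictOrderedRing F] [TopologicalSpace F] [OrderTopology F]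
    (L : FirstOrder.Language) [L.Structure F]
    (hfield : IsOrderedFieldExpansion (F := F) L)
    {m : ℕ} (X : Set (Fin m → F)) (E : Set (Fin m ⊕ Fin m → F))
    (hXdef : IsDef L X)
    (hE : IsDefEquivOn L X E)
    (K : Set (Fin m → F)) (hKdef : IsDef L K) (hKX : K ⊆ X) (hKclosed : IsClosed K)
    (hq1 : IsDefIdentifying L {v | v ∈ E ∧ v ∘ Sum.inr ∈ K} X (fun v => v ∘ Sum.inl)) :
    ((∃ (n : ℕ) (Y : Set (Fin n → F)) (f : (Fin m → F) → (Fin n → F)),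
        IsDefQuotient L X E Y f) ↔
      (∃ (n : ℕ) (Y : Set (Fin n → F)) (f : (Fin m → F) → (Fin n → F)),
        IsDefQuotient L K
          (E ∩ {v : Fin m ⊕ Fin m → F | v ∘ Sum.inl ∈ K ∧ v ∘ Sum.inr ∈ K}) Y f)) ∧
    ∀ (n : ℕ) (Y : Set (Fin n → F)) (f : (Fin m → F) → (Fin n → F)),
      IsDefQuotient L X E Y f →
      IsDefQuotient L K
        (E ∩ {v : Fin m ⊕ Fin m → F | v ∘ Sum.inl ∈ K ∧ v ∘ Sum.inr ∈ K}) Y f := by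
  have restrict := fun (n : ℕ) (Y : Set (Fin n → F)) (f : (Fin m → F) → (Fin n → F))
    (hf : IsDefQuotient L X E Y f) => hf.restrict hE hKdef hKX hKclosed hq1
  refine ⟨⟨fun ⟨n, Y, f, hf⟩ => ⟨n, Y, f, restrict n Y f hf⟩, fun ⟨n, Y, g, hg⟩ => ?_⟩, restrict⟩
  choose! r hrK hrE using fun x (hx : x ∈ X) => exists_mem_rel_of_isDefIdentifying hq1 hx
  exact ⟨n, Y, _, hg.extend hfield.1 hXdef hE hKX hKclosed hq1 hrK hrE⟩

/-- reduction of definable quotients to a definable closed subset K when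
the restriction of the first projection to p₂⁻¹(K) is definably identifying. -/
theorem statement_7
    {F : Type*} [Field F] [LinearOrder F] [IsStrictOrderedRing F] [TopologicalSpace F] [OrderTopology F]
    (L : FirstOrder.Language) [L.Structure F]
    (hfield : IsOrderedFieldExpansion (F := F) L)
    (hdc : DefinablyComplete (F := F) L)
    (hlo : LocallyOMinimal (F := F) L)
    {m : ℕ} (X : Set (Fin m → F)) (E : Set (Fin m ⊕ Fin m → F))
    (hXdef : IsDef L X) (hXclosed : IsClosed X)
    (hE : IsDefEquivOn L X E)
    (hEclosed : ClosedIn {v : Fin m ⊕ Fin m → F | v ∘ Sum.inl ∈ X ∧ v ∘ Sum.inr ∈ X} E)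
    (K : Set (Fin m → F)) (hKdef : IsDef L K) (hKX : K ⊆ X) (hKclosed : IsClosed K)
    (hq1 : IsDefIdentifying L {v | v ∈ E ∧ v ∘ Sum.inr ∈ K} X (fun v => v ∘ Sum.inl)) :
    ((∃ (n : ℕ) (Y : Set (Fin n → F)) (f : (Fin m → F) → (Fin n → F)),
        IsDefQuotient L X E Y f) ↔
      (∃ (n : ℕ) (Y : Set (Fin n → F)) (f : (Fin m → F) → (Fin n → F)),
        IsDefQuotient L K
          (E ∩ {v : Fin m ⊕ Fin m → F | v ∘ Sum.inl ∈ K ∧ v ∘ Sum.inr ∈ K}) Y f)) ∧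
    ∀ (n : ℕ) (Y : Set (Fin n → F)) (f : (Fin m → F) → (Fin n → F)),
      IsDefQuotient L X E Y f →
      IsDefQuotient L K
        (E ∩ {v : Fin m ⊕ Fin m → F | v ∘ Sum.inl ∈ K ∧ v ∘ Sum.inr ∈ K}) Y f :=
  statement_7_general L hfield X E hXdef hE K hKdef hKX hKclosed hq1
end

section
/- Consider a definably complete locally o-minimal expansion 𝓕 = (F, <, +, ·, 0, 1, …) of an ordered field. Let X be a definable set and E ⊆ X × X a definable equivalence relation on X which is definably proper over X, and let p₁, p₂ : E → X be the restrictions to E of the two projections X × X → X. Let γ : (0,ε) → E be a definable curve and set α = p₁ ∘ γ, β = p₂ ∘ γ. If either α or β is completable in X, then both are completable in X; moreover, in that case, if α → p and β → q, then γ → (p,q). -/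
open FirstOrder Set Topology Filter

/-!
Suppose `α = p₁ ∘ γ` tends to `p ∈ X`. For small `δ > 0` the set `K = {p} ∪ α((0, δ])` is
definable, contained in `X`, bounded, and closed: a point `x ≠ p` of its closure is reached by
`α` at the supremum of the times before which `α` avoids some box around `x` (this supremum
exists by definable completeness). Properness makes `p₁⁻¹(K) ∩ E` closed and bounded, and `γ`
stays in it near `0`. A bounded definable curve converges: in each coordinate the limit is the
infimum of the eventual upper bounds, local o-minimality ruling out oscillation below it. The
limit of `γ` then lies in the closed set `p₁⁻¹(K) ∩ E`. If instead `β` is completable, apply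
this to the curve `γ` composed with the swap, which stays in `E` by symmetry.
-/

section Definability

variable {F : Type*} {L : FirstOrder.Language} [L.Structure F] {κ ι : Type}

namespace IsDef

theorem and {P Q : (κ → F) → Prop} (hP : IsDef L {v | P v}) (hQ : IsDef L {v | Q v}) :
    IsDef L {v | P v ∧ Q v} :=
  Set.Definable.inter hP hQ

theorem or {P Q : (κ → F) → Prop} (hP : IsDef L {v | P v}) (hQ : IsDef L {v | Q v}) :
    IsDef L {v | P v ∨ Q v} :=
  Set.Definable.union hP hQ

theorem not {P : (κ → F) → Prop} (hP : IsDef L {v | P v}) : IsDef L {v | ¬P v} :=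
  Set.Definable.compl hP

theorem imp {P Q : (κ → F) → Prop} (hP : IsDef L {v | P v}) (hQ : IsDef L {v | Q v}) :
    IsDef L {v | P v → Q v} := by
  simpa only [imp_iff_not_or] using hP.not.or hQ

theorem forall_of_finite [Finite ι] {P : ι → (κ → F) → Prop} (hP : ∀ i, IsDef L {v | P i v}) :
    IsDef L {v | ∀ i, P i v} := by
  simpa only [IsDef, Set.ofPred_forall] using Set.definable_iInter_of_finite hP

theorem relabel {κ' : Type} {P : (κ → F) → Prop} (hP : IsDef L {v | P v}) (f : κ → κ') :
    IsDef L {v : κ' → F | P (v ∘ f)} :=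
  Set.Definable.preimage_comp f hP

theorem exists_tuple [Finite κ] [Finite ι] {P : (κ → F) → (ι → F) → Prop}
    (hP : IsDef L {w : κ ⊕ ι → F | P (w ∘ Sum.inl) (w ∘ Sum.inr)}) :
    IsDef L {v | ∃ z, P v z} := by
  unfold IsDef
  convert Set.Definable.image_comp hP Sum.inl using 1
  ext v
  constructor
  · rintro ⟨z, hz⟩
    exact ⟨Sum.elim v z, by simpa using hz, Sum.elim_comp_inl v z⟩
  · rintro ⟨w, hw, rfl⟩
    exact ⟨w ∘ Sum.inr, hw⟩

theorem exists_scalar [Finite κ] {P : (κ → F) → F → Prop}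
    (hP : IsDef L {w : κ ⊕ Unit → F | P (w ∘ Sum.inl) (w (Sum.inr ()))}) :
    IsDef L {v | ∃ d, P v d} := by
  convert exists_tuple (P := fun v z => P v (z ())) hP using 3 with v
  exact ⟨fun ⟨d, hd⟩ => ⟨fun _ => d, hd⟩, fun ⟨z, hz⟩ => ⟨z (), hz⟩⟩

end IsDef

open FirstOrder.Language in
theorem isDef_eq (i j : κ) : IsDef L {v : κ → F | v i = v j} :=
  ⟨(Term.var i).equal (Term.var j), by ext v; simp [Term.equal, Formula.Realize]⟩

open FirstOrder.Language in
theorem isDef_eq_const (i : κ) (c : F) : IsDef L {v : κ → F | v i = c} :=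
  ⟨(Term.var i).equal (L.con ⟨c, mem_univ c⟩).term, by
    ext v; simp [Term.equal, Formula.Realize, coe_con]⟩

theorem IsDef.subst_const [Finite κ] {P : (κ → F) → F → Prop}
    (hP : IsDef L {w : κ ⊕ Unit → F | P (w ∘ Sum.inl) (w (Sum.inr ()))}) (c : F) :
    IsDef L {v | P v c} := by
  have h := IsDef.exists_scalar (P := fun v d => P v d ∧ d = c)
    (hP.and (isDef_eq_const (Sum.inr ()) c))
  simpa only [exists_eq_right] using h

section Order

variable [LinearOrder F]

theorem isDef_lt (hord : IsOrderExpansion (F := F) L) (i j : κ) :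
    IsDef L {v : κ → F | v i < v j} :=
  IsDef.relabel (P := fun w : Fin 2 → F => w 0 < w 1) hord ![i, j]

theorem isDef_le (hord : IsOrderExpansion (F := F) L) (i j : κ) :
    IsDef L {v : κ → F | v i ≤ v j} := by
  simpa only [not_lt] using (isDef_lt hord j i).not

theorem isDef_lt_const [Finite κ] (hord : IsOrderExpansion (F := F) L) (i : κ) (c : F) :
    IsDef L {v : κ → F | v i < c} :=
  (isDef_lt hord (Sum.inl i) (Sum.inr ())).subst_const (P := fun v d => v i < d) c

theorem isDef_const_lt [Finite κ] (hord : IsOrderExpansion (F := F) L) (c : F) (i : κ) :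
    IsDef L {v : κ → F | c < v i} :=
  (isDef_lt hord (Sum.inr ()) (Sum.inl i)).subst_const (P := fun v d => d < v i) c

theorem isDef_le_const [Finite κ] (hord : IsOrderExpansion (F := F) L) (i : κ) (c : F) :
    IsDef L {v : κ → F | v i ≤ c} := by
  simpa only [not_lt] using (isDef_const_lt hord c i).not

variable [Zero F] {ε δ : F}

def curveGraph (ε : F) (γ : F → (ι → F)) : Set (Unit ⊕ ι → F) :=
  {v | v (Sum.inl ()) ∈ Ioo 0 ε ∧ γ (v (Sum.inl ())) = v ∘ Sum.inr}

def avoidanceTimes (δ : F) (α : F → (ι → F)) (x : ι → F) : Set F :=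
  {a | ∃ l u : ι → F, (∀ i, x i ∈ Ioo (l i) (u i)) ∧
    ∀ t ∈ Ioc 0 δ, (∀ i, α t i ∈ Ioo (l i) (u i)) → a ≤ t}

variable [Finite κ] [Finite ι] {γ : F → (ι → F)}

theorem IsDef.exists_curve (hγ : IsDef L (curveGraph ε γ)) {Q : (κ → F) → F → (ι → F) → Prop}
    (hQ : IsDef L {w : κ ⊕ (Unit ⊕ ι) → F |
      Q (w ∘ Sum.inl) (w (Sum.inr (Sum.inl ()))) (w ∘ Sum.inr ∘ Sum.inr)}) :
    IsDef L {v | ∃ t ∈ Ioo 0 ε, Q v t (γ t)} := by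
  have h := IsDef.exists_tuple
    (P := fun v z => z ∈ curveGraph ε γ ∧ Q v (z (Sum.inl ())) (z ∘ Sum.inr))
    ((hγ.relabel (P := (· ∈ curveGraph ε γ)) Sum.inr).and hQ)
  convert h using 1
  ext v
  constructor
  · rintro ⟨t, ht, hQt⟩
    exact ⟨Sum.elim (fun _ => t) (γ t), ⟨ht, rfl⟩, hQt⟩
  · rintro ⟨z, ⟨hz, hzγ⟩, hQz⟩
    exact ⟨_, hz, hzγ ▸ hQz⟩

theorem IsDef.forall_curve (hγ : IsDef L (curveGraph ε γ)) {Q : (κ → F) → F → (ι → F) → Prop}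
    (hQ : IsDef L {w : κ ⊕ (Unit ⊕ ι) → F |
      Q (w ∘ Sum.inl) (w (Sum.inr (Sum.inl ()))) (w ∘ Sum.inr ∘ Sum.inr)}) :
    IsDef L {v | ∀ t ∈ Ioo 0 ε, Q v t (γ t)} := by
  simpa only [not_exists, not_and, not_not] using
    (hγ.exists_curve (Q := fun v t y => ¬Q v t y) hQ.not).not

theorem IsDef.curveGraph_comp {β : Type} [Finite β] (hγ : IsDef L (curveGraph ε γ))
    (f : β → ι) : IsDef L (curveGraph ε fun t => γ t ∘ f) := by
  have h := hγ.exists_curve (Q := fun v t y => t = v (Sum.inl ()) ∧ ∀ b, y (f b) = v (Sum.inr b))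
    ((isDef_eq _ _).and (IsDef.forall_of_finite fun b => isDef_eq _ _))
  convert h using 1
  ext v
  constructor
  · rintro ⟨hv, hvγ⟩
    exact ⟨_, hv, rfl, fun b => congrFun hvγ b⟩
  · rintro ⟨t, ht, rfl, hγv⟩
    exact ⟨ht, funext hγv⟩

theorem isDef_insert_image_Ioc (hord : IsOrderExpansion (F := F) L)
    (hγ : IsDef L (curveGraph ε γ)) (hδε : δ < ε) (p : ι → F) :
    IsDef L (insert p (γ '' Ioc 0 δ)) := by
  have h : IsDef L {x : ι → F | (∀ i, x i = p i) ∨ ∃ t ∈ Ioo 0 ε, t ≤ δ ∧ ∀ i, γ t i = x i} :=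
    (IsDef.forall_of_finite fun i => isDef_eq_const i (p i)).or
      (hγ.exists_curve (Q := fun x t y => t ≤ δ ∧ ∀ i, y i = x i)
        ((isDef_le_const hord _ _).and (IsDef.forall_of_finite fun i => isDef_eq _ _)))
  convert h using 1
  ext x
  simp only [mem_insert_iff, mem_image, mem_ofPred_eq, funext_iff]
  refine or_congr Iff.rfl ⟨fun ⟨t, ht, htx⟩ => ⟨t, ⟨ht.1, ht.2.trans_lt hδε⟩, ht.2, htx⟩,
    fun ⟨t, ht, htδ, htx⟩ => ⟨t, ⟨ht.1, htδ⟩, htx⟩⟩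

theorem isDef_avoidanceTimes (hord : IsOrderExpansion (F := F) L)
    (hγ : IsDef L (curveGraph ε γ)) (hδε : δ < ε) (x : ι → F) :
    IsDef L {v : Fin 1 → F | v 0 ∈ avoidanceTimes δ γ x} := by
  have h : IsDef L {v : Fin 1 → F | ∃ l u : ι → F, (∀ i, l i < x i ∧ x i < u i) ∧
      ∀ t ∈ Ioo 0 ε, t ≤ δ → (∀ i, l i < γ t i ∧ γ t i < u i) → v 0 ≤ t} := by
    refine IsDef.exists_tuple (IsDef.exists_tuple ?_)
    refine (IsDef.forall_of_finite fun i => (isDef_lt_const hord _ _).and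
      (isDef_const_lt hord _ _)).and ?_
    exact hγ.forall_curve
      (Q := fun w t y => t ≤ δ → (∀ i, w (Sum.inl (Sum.inr i)) < y i ∧ y i < w (Sum.inr i)) →
        w (Sum.inl (Sum.inl 0)) ≤ t)
      ((isDef_le_const hord _ _).imp ((IsDef.forall_of_finite fun i =>
        (isDef_lt hord _ _).and (isDef_lt hord _ _)).imp (isDef_le hord _ _)))
  convert h using 1
  ext v
  refine exists₂_congr fun l u => and_congr Iff.rfl ⟨fun h t ht htδ => h t ⟨ht.1, htδ⟩,
    fun h t ht => h t ⟨ht.1, ht.2.trans_lt hδε⟩ ht.2⟩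

end Order

end Definability

section OrderTopology

variable {F : Type*} [LinearOrder F] [TopologicalSpace F] [OrderTopology F]
  {L : FirstOrder.Language} [L.Structure F] {ι : Type}

theorem eventually_nhdsGT_iff_forall_lt [NoMaxOrder F] {P : F → Prop} {a ε : F} (hε : a < ε) :
    (∀ᶠ t in 𝓝[>] a, P t) ↔ ∃ d, a < d ∧ ∀ t ∈ Ioo a ε, t < d → P t := by
  rw [(nhdsGT_basis a).eventually_iff]
  constructor
  · rintro ⟨d, hd, h⟩
    exact ⟨d, hd, fun t ht htd => h ⟨ht.1, htd⟩⟩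
  · rintro ⟨d, hd, h⟩
    exact ⟨min d ε, lt_min hd hε, fun t ht =>
      h t ⟨ht.1, ht.2.trans_le (min_le_right _ _)⟩ (ht.2.trans_le (min_le_left _ _))⟩

theorem LocallyOMinimal.eventually_mem_or_eventually_not_mem (hlo : LocallyOMinimal (F := F) L)
    {s : Set F} (hs : IsDef L {v : Fin 1 → F | v 0 ∈ s}) (a : F) :
    (∀ᶠ t in 𝓝[>] a, t ∈ s) ∨ ∀ᶠ t in 𝓝[>] a, t ∉ s := by
  obtain ⟨b, c, hb, hc, P, I, hPI⟩ := hlo s hs a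
  have hbc : ∀ᶠ t in 𝓝[>] a, t ∈ Ioo b c := mem_nhdsWithin_of_mem_nhds (Ioo_mem_nhds hb hc)
  by_cases hI : ∃ q ∈ I, q.1 ≤ a ∧ a < q.2
  · obtain ⟨q, hq, hq₁, hq₂⟩ := hI
    left
    filter_upwards [hbc, Ioo_mem_nhdsGT hq₂] with t htbc htq
    have : t ∈ s ∩ Ioo b c := hPI ▸ Or.inr (mem_biUnion hq ⟨hq₁.trans_lt htq.1, htq.2⟩)
    exact this.1
  · right
    push Not at hI
    have hP : ∀ᶠ t in 𝓝[>] a, ∀ x ∈ P, t ≠ x := by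
      refine (Filter.eventually_all_finset P).2 fun x _ => ?_
      rcases lt_or_ge a x with hax | hxa
      · filter_upwards [Ioo_mem_nhdsGT hax] with t ht using ht.2.ne
      · filter_upwards [self_mem_nhdsWithin] with t ht using (hxa.trans_lt ht).ne'
    have hI' : ∀ᶠ t in 𝓝[>] a, ∀ q ∈ I, t ∉ Ioo q.1 q.2 := by
      refine (Filter.eventually_all_finset I).2 fun q hq => ?_
      rcases lt_or_ge a q.1 with haq | hqa
      · filter_upwards [Ioo_mem_nhdsGT haq] with t ht htq using (ht.2.trans htq.1).false
      · filter_upwards [self_mem_nhdsWithin] with t ht htq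
          using (hI q hq hqa).not_gt (ht.trans htq.2)
    filter_upwards [hbc, hP, hI'] with t htbc htP htI hts
    have : t ∈ (P : Set F) ∪ ⋃ q ∈ I, Ioo q.1 q.2 := hPI ▸ ⟨hts, htbc⟩
    rcases this with ht | ht
    · exact htP t ht rfl
    · obtain ⟨q, hq, htq⟩ := mem_iUnion₂.1 ht
      exact htI q hq htq

theorem eventually_forall_mem_Ioo [Finite ι] {x l u : ι → F} (hx : ∀ i, x i ∈ Ioo (l i) (u i)) :
    ∀ᶠ y in 𝓝 x, ∀ i, y i ∈ Ioo (l i) (u i) :=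
  Filter.eventually_all.2 fun i =>
    (continuous_apply i).continuousAt.eventually (Ioo_mem_nhds (hx i).1 (hx i).2)

variable [NoMaxOrder F] [NoMinOrder F]

theorem exists_forall_mem_Ioo_subset_of_mem_nhds {x : ι → F} {U : Set (ι → F)} (hU : U ∈ 𝓝 x) :
    ∃ l u : ι → F, (∀ i, x i ∈ Ioo (l i) (u i)) ∧
      ∀ y : ι → F, (∀ i, y i ∈ Ioo (l i) (u i)) → y ∈ U := by
  rw [nhds_pi, Filter.mem_pi] at hU
  obtain ⟨I, -, V, hV, hVU⟩ := hU
  choose b hb hbV using fun i => (nhds_basis_Ioo (x i)).mem_iff.1 (hV i)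
  exact ⟨fun i => (b i).1, fun i => (b i).2, hb, fun y hy => hVU fun i _ => hbV i (hy i)⟩

end OrderTopology

section Limits

variable {F : Type*} [LinearOrder F] [TopologicalSpace F] [OrderTopology F] [NoMaxOrder F]
  [Zero F] {L : FirstOrder.Language} [L.Structure F] {ε : F}

theorem IsDef.eventually_curve (hord : IsOrderExpansion (F := F) L) (hε : 0 < ε) {κ ι : Type}
    [Finite κ] [Finite ι] {γ : F → (ι → F)} (hγ : IsDef L (curveGraph ε γ))
    {Q : (κ → F) → F → (ι → F) → Prop}
    (hQ : IsDef L {w : κ ⊕ (Unit ⊕ ι) → F |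
      Q (w ∘ Sum.inl) (w (Sum.inr (Sum.inl ()))) (w ∘ Sum.inr ∘ Sum.inr)}) :
    IsDef L {v | ∀ᶠ t in 𝓝[>] 0, Q v t (γ t)} := by
  simp only [eventually_nhdsGT_iff_forall_lt hε]
  exact IsDef.exists_scalar ((isDef_const_lt hord 0 _).and (hγ.forall_curve
    (Q := fun v t y => t < v (Sum.inr ()) → Q (v ∘ Sum.inl) t y)
    ((isDef_lt hord _ _).imp (hQ.relabel (Sum.map Sum.inl id)))))

variable [DenselyOrdered F]

theorem exists_tendsto_of_eventually_mem_Icc (hdc : DefinablyComplete (F := F) L)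
    (hlo : LocallyOMinimal (F := F) L) (hord : IsOrderExpansion (F := F) L) (hε : 0 < ε)
    {f : F → F} (hf : IsDef L (curveGraph ε fun t (_ : Unit) => f t)) {a b : F}
    (hab : ∀ᶠ t in 𝓝[>] 0, f t ∈ Icc a b) :
    ∃ l, Tendsto f (𝓝[>] 0) (𝓝 l) := by
  set U := {c | ∀ᶠ t in 𝓝[>] 0, f t ≤ c}
  have hU : IsDef L {v : Fin 1 → F | v 0 ∈ U} :=
    hf.eventually_curve hord hε (Q := fun (v : Fin 1 → F) _ y => y () ≤ v 0) (isDef_le hord _ _)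
  have hbU : b ∈ U := hab.mono fun t ht => ht.2
  have haU : a ∈ lowerBounds U := fun c hc =>
    ((hab.and hc).exists).elim fun t ht => ht.1.1.trans ht.2
  obtain ⟨l, hl⟩ := (hdc U hU ⟨b, hbU⟩).2 ⟨a, haU⟩
  refine ⟨l, tendsto_order.2 ⟨fun c hc => ?_, fun c hc => ?_⟩⟩
  · have hS : IsDef L {v : Fin 1 → F | v 0 ∈ {t | t ∈ Ioo 0 ε ∧ f t ≤ c}} := by
      have h := hf.exists_curve (Q := fun (v : Fin 1 → F) t y => t = v 0 ∧ y () ≤ c)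
        ((isDef_eq _ _).and (isDef_le_const hord _ _))
      convert h using 1
      ext v
      exact ⟨fun hv => ⟨v 0, hv.1, rfl, hv.2⟩, by rintro ⟨t, ht, rfl, htc⟩; exact ⟨ht, htc⟩⟩
    rcases hlo.eventually_mem_or_eventually_not_mem hS 0 with h | h
    · exact absurd (hl.1 (h.mono fun t ht => ht.2)) (not_le.2 hc)
    · filter_upwards [h, Ioo_mem_nhdsGT hε] with t ht htε
      exact lt_of_not_ge fun htc => ht ⟨htε, htc⟩
  · obtain ⟨u, hu, -, huc⟩ := hl.exists_between hc
    filter_upwards [hu] with t ht using ht.trans_lt huc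

theorem exists_tendsto_of_eventually_bdd (hdc : DefinablyComplete (F := F) L)
    (hlo : LocallyOMinimal (F := F) L) (hord : IsOrderExpansion (F := F) L) (hε : 0 < ε)
    {ι : Type} [Finite ι] {γ : F → (ι → F)} (hγ : IsDef L (curveGraph ε γ)) {a b : F}
    (hab : ∀ᶠ t in 𝓝[>] 0, ∀ i, γ t i ∈ Icc a b) :
    ∃ l, Tendsto γ (𝓝[>] 0) (𝓝 l) := by
  choose l hl using fun i => exists_tendsto_of_eventually_mem_Icc hdc hlo hord hε
    (hγ.curveGraph_comp fun _ : Unit => i) (hab.mono fun t ht => ht i)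
  exact ⟨l, tendsto_pi_nhds.2 hl⟩

end Limits

section Closed

variable {F : Type*} [LinearOrder F] [TopologicalSpace F] [OrderTopology F] [NoMaxOrder F]
  [NoMinOrder F] [Zero F] {L : FirstOrder.Language} [L.Structure F] {ι : Type}
  {ε δ : F} {α : F → (ι → F)}

theorem pos_of_isLUB_avoidanceTimes {x p : ι → F} (hxp : x ≠ p)
    (hp : Tendsto α (𝓝[>] 0) (𝓝 p)) {s : F} (hs : IsLUB (avoidanceTimes δ α x) s) : 0 < s := by
  obtain ⟨U, V, hU, hV, hxU, hpV, hUV⟩ := t2_separation hxp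
  obtain ⟨θ, hθ, hθV⟩ := (nhdsGT_basis 0).mem_iff.1 (hp (hV.mem_nhds hpV))
  obtain ⟨l, u, hxlu, hluU⟩ := exists_forall_mem_Ioo_subset_of_mem_nhds (hU.mem_nhds hxU)
  have hθA : θ ∈ avoidanceTimes δ α x := ⟨l, u, hxlu, fun t ht htlu => not_lt.1 fun htθ =>
    hUV.ne_of_mem (hluU _ htlu) (hθV ⟨ht.1, htθ⟩) rfl⟩
  exact hθ.trans_le (hs.1 hθA)

variable [Finite ι]

theorem eq_of_isLUB_avoidanceTimes {x : ι → F} {s : F} (hs : IsLUB (avoidanceTimes δ α x) s)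
    (hcont : ContinuousAt α s) : α s = x := by
  by_contra hsx
  obtain ⟨U, W, hU, hW, hxU, hsW, hUW⟩ := t2_separation (Ne.symm hsx)
  obtain ⟨⟨c, d⟩, ⟨hcs, hsd⟩, hcdW⟩ := (nhds_basis_Ioo s).mem_iff.1
    (hcont.preimage_mem_nhds (hW.mem_nhds hsW))
  obtain ⟨a, ⟨l', u', hxlu', ha⟩, hca, -⟩ := hs.exists_between hcs
  obtain ⟨l, u, hxlu, hluU⟩ := exists_forall_mem_Ioo_subset_of_mem_nhds
    (Filter.inter_mem (hU.mem_nhds hxU) (eventually_forall_mem_Ioo hxlu'))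
  have hdA : d ∈ avoidanceTimes δ α x := ⟨l, u, hxlu, fun t ht htlu => not_lt.1 fun htd =>
    hUW.ne_of_mem (hluU _ htlu).1 (hcdW ⟨hca.trans_le (ha t ht (hluU _ htlu).2), htd⟩) rfl⟩
  exact (hsd.trans_le (hs.1 hdA)).false

theorem isClosed_insert_image_Ioc (hdc : DefinablyComplete (F := F) L)
    (hord : IsOrderExpansion (F := F) L) (hα : IsDef L (curveGraph ε α))
    (hcont : ContinuousOn α (Ioo 0 ε)) {p : ι → F} (hp : Tendsto α (𝓝[>] 0) (𝓝 p))
    (hδε : δ < ε) :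
    IsClosed (insert p (α '' Ioc 0 δ)) := by
  refine isClosed_of_closure_subset fun x hx => ?_
  rcases eq_or_ne x p with rfl | hxp
  · exact mem_insert _ _
  have hvisit : ∀ U ∈ 𝓝 x, ∃ t ∈ Ioc 0 δ, α t ∈ U := by
    intro U hU
    obtain ⟨y, ⟨hyU, hyp⟩, hyK⟩ := mem_closure_iff_nhds.1 hx _
      (Filter.inter_mem hU (isOpen_compl_singleton.mem_nhds hxp))
    rcases hyK with rfl | ⟨t, ht, rfl⟩
    · exact absurd rfl hyp
    · exact ⟨t, ht, hyU⟩
  have hδA : δ ∈ upperBounds (avoidanceTimes δ α x) := by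
    rintro a ⟨l, u, hxlu, ha⟩
    obtain ⟨t, ht, htlu⟩ := hvisit _ (eventually_forall_mem_Ioo hxlu)
    exact (ha t ht htlu).trans ht.2
  have h0A : (0 : F) ∈ avoidanceTimes δ α x := by
    obtain ⟨l, u, hxlu, -⟩ := exists_forall_mem_Ioo_subset_of_mem_nhds (Filter.univ_mem (f := 𝓝 x))
    exact ⟨l, u, hxlu, fun t ht _ => ht.1.le⟩
  obtain ⟨s, hs⟩ := (hdc _ (isDef_avoidanceTimes hord hα hδε x) ⟨0, h0A⟩).1 ⟨δ, hδA⟩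
  have hs_mem : s ∈ Ioc 0 δ := ⟨pos_of_isLUB_avoidanceTimes hxp hp hs, hs.2 hδA⟩
  have hαs : ContinuousAt α s := hcont.continuousAt (Ioo_mem_nhds hs_mem.1 (hs_mem.2.trans_lt hδε))
  exact mem_insert_of_mem _ ⟨s, hs_mem, eq_of_isLUB_avoidanceTimes hs hαs⟩

end Closed

theorem isBdd_of_forall_mem_Icc {F : Type*} [LinearOrder F] [Nonempty F] {ι : Type} [Finite ι]
    {s : Set (ι → F)} {l u : ι → F}
    (h : ∀ v ∈ s, ∀ i, v i ∈ Icc (l i) (u i)) : IsBdd s := by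
  obtain ⟨a, ha⟩ := (finite_range l).bddBelow
  obtain ⟨b, hb⟩ := (finite_range u).bddAbove
  exact ⟨a, b, fun v hv i =>
    ⟨(ha ⟨i, rfl⟩).trans (h v hv i).1, (h v hv i).2.trans (hb ⟨i, rfl⟩)⟩⟩

section Proper

variable {F : Type*} [LinearOrder F] [TopologicalSpace F] [Zero F] {L : FirstOrder.Language}
  [L.Structure F] {ι : Type} [Finite ι] {ε : F} {X : Set (ι → F)} {E : Set (ι ⊕ ι → F)}
  {γ : F → (ι ⊕ ι → F)}

theorem IsDefCurve.comp_swap (hγ : IsDefCurve L ε E γ)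
    (hE : ∀ x y : ι → F, Sum.elim x y ∈ E → Sum.elim y x ∈ E) :
    IsDefCurve L ε E fun t => γ t ∘ Sum.swap := by
  refine ⟨IsDef.curveGraph_comp hγ.1 Sum.swap,
    (continuous_pi fun i => continuous_apply _).comp_continuousOn hγ.2.1, fun t ht => ?_⟩
  have h := hE _ _ ((Sum.elim_comp_inl_inr (γ t)).symm ▸ hγ.2.2 ht)
  rwa [← Sum.elim_swap, Sum.elim_comp_inl_inr] at h

variable [OrderTopology F] [DenselyOrdered F] [NoMaxOrder F] [NoMinOrder F]

theorem IsDefProper.exists_tendsto_of_tendsto_comp_inl (hdc : DefinablyComplete (F := F) L)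
    (hlo : LocallyOMinimal (F := F) L) (hord : IsOrderExpansion (F := F) L)
    (hEproper : IsDefProper L E X (· ∘ Sum.inl)) (hEX : ∀ v ∈ E, v ∘ Sum.inl ∈ X) (hε : 0 < ε)
    (hγ : IsDefCurve L ε E γ) {p : ι → F} (hp : p ∈ X)
    (hαp : Tendsto (fun t => γ t ∘ Sum.inl) (𝓝[>] 0) (𝓝 p)) :
    ∃ z ∈ E, Tendsto γ (𝓝[>] 0) (𝓝 z) := by
  obtain ⟨hγdef, hγcont, hγE⟩ := hγ
  set α := fun t => γ t ∘ Sum.inl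
  obtain ⟨l, u, hplu, -⟩ := exists_forall_mem_Ioo_subset_of_mem_nhds (Filter.univ_mem (f := 𝓝 p))
  obtain ⟨θ, hθ, hθlu⟩ := (nhdsGT_basis 0).mem_iff.1 (hαp (eventually_forall_mem_Ioo hplu))
  obtain ⟨δ, hδ, hδθε⟩ := exists_between (lt_min hθ hε)
  have hδθ : δ < θ := hδθε.trans_le (min_le_left _ _)
  have hδε : δ < ε := hδθε.trans_le (min_le_right _ _)
  set K := insert p (α '' Ioc 0 δ)
  have hKX : K ⊆ X := by
    rintro _ (rfl | ⟨t, ht, rfl⟩)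
    exacts [hp, hEX _ (hγE ⟨ht.1, ht.2.trans_lt hδε⟩)]
  have hKlu : ∀ y ∈ K, ∀ i, y i ∈ Icc (l i) (u i) := by
    rintro _ (rfl | ⟨t, ht, rfl⟩) i
    exacts [Ioo_subset_Icc_self (hplu i),
      Ioo_subset_Icc_self (hθlu ⟨ht.1, ht.2.trans_lt hδθ⟩ i)]
  have hαdef : IsDef L (curveGraph ε α) := IsDef.curveGraph_comp hγdef Sum.inl
  have hαcont : ContinuousOn α (Ioo 0 ε) :=
    (continuous_pi fun i => continuous_apply (Sum.inl i)).comp_continuousOn hγcont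
  obtain ⟨hPclosed, hPbdd⟩ := hEproper K (isDef_insert_image_Ioc hord hαdef hδε p) hKX
    (isClosed_insert_image_Ioc hdc hord hαdef hαcont hαp hδε) (isBdd_of_forall_mem_Icc hKlu)
  have hγP : ∀ᶠ t in 𝓝[>] 0, γ t ∈ {v | v ∈ E ∧ v ∘ Sum.inl ∈ K} := by
    filter_upwards [Ioo_mem_nhdsGT hδ] with t ht
    exact ⟨hγE ⟨ht.1, ht.2.trans hδε⟩, mem_insert_of_mem _ ⟨t, ⟨ht.1, ht.2.le⟩, rfl⟩⟩
  obtain ⟨a, b, hab⟩ := hPbdd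
  obtain ⟨z, hz⟩ := exists_tendsto_of_eventually_bdd hdc hlo hord hε hγdef
    (hγP.mono fun t ht i => hab _ ht i)
  exact ⟨z, (hPclosed.mem_of_tendsto hz hγP).1, hz⟩

theorem completable_comp_inr_of_completable_comp_inl (hdc : DefinablyComplete (F := F) L)
    (hlo : LocallyOMinimal (F := F) L) (hord : IsOrderExpansion (F := F) L)
    (hE : IsDefEquivOn L X E) (hEproper : IsDefProper L E X (· ∘ Sum.inl)) (hε : 0 < ε)
    (hγ : IsDefCurve L ε E γ) (hα : Completable ε X fun t => γ t ∘ Sum.inl) :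
    Completable ε X fun t => γ t ∘ Sum.inr := by
  obtain ⟨p, hp, hαp⟩ := hα
  rw [CurveTendsto, nhdsWithin_Ioo_eq_nhdsGT hε] at hαp
  obtain ⟨z, hzE, hz⟩ := hEproper.exists_tendsto_of_tendsto_comp_inl hdc hlo hord
    (fun v hv => (hE.2.1 v hv).1) hε hγ hp hαp
  refine ⟨z ∘ Sum.inr, (hE.2.1 z hzE).2, ?_⟩
  rw [CurveTendsto, nhdsWithin_Ioo_eq_nhdsGT hε]
  exact tendsto_pi_nhds.2 fun i => tendsto_pi_nhds.1 hz (Sum.inr i)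

end Proper

theorem statement_11_general
    {F : Type*} [Field F] [LinearOrder F] [IsStrictOrderedRing F] [TopologicalSpace F] [OrderTopology F]
    (L : FirstOrder.Language) [L.Structure F]
    (hfield : IsOrderedFieldExpansion (F := F) L)
    (hdc : DefinablyComplete (F := F) L)
    (hlo : LocallyOMinimal (F := F) L)
    {m : ℕ} (X : Set (Fin m → F)) (E : Set (Fin m ⊕ Fin m → F))
    (hE : IsDefEquivOn L X E)
    (hEproper : IsDefProper L E X (fun v => v ∘ Sum.inl))
    (ε : F) (hε : 0 < ε) (γ : F → (Fin m ⊕ Fin m → F)) (hγ : IsDefCurve L ε E γ)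
    (hc : Completable ε X (fun t => γ t ∘ Sum.inl) ∨
          Completable ε X (fun t => γ t ∘ Sum.inr)) :
    (Completable ε X (fun t => γ t ∘ Sum.inl) ∧
     Completable ε X (fun t => γ t ∘ Sum.inr)) ∧
    ∀ p q : Fin m → F, CurveTendsto ε (fun t => γ t ∘ Sum.inl) p →
      CurveTendsto ε (fun t => γ t ∘ Sum.inr) q →
      CurveTendsto ε γ (Sum.elim p q) := by
  have hswap := hγ.comp_swap hE.2.2.2.1
  refine ⟨?_, fun p q hp hq => tendsto_pi_nhds.2 ?_⟩
  · rcases hc with hα | hβ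
    · exact ⟨hα, completable_comp_inr_of_completable_comp_inl hdc hlo hfield.1 hE hEproper hε hγ hα⟩
    · exact ⟨completable_comp_inr_of_completable_comp_inl hdc hlo hfield.1 hE hEproper hε hswap hβ,
        hβ⟩
  · rintro (i | i)
    exacts [tendsto_pi_nhds.1 hp i, tendsto_pi_nhds.1 hq i]

/-- for a definable equivalence relation E definably proper over X, a
definable curve in E has completable first component iff it has completable second
component, and the curve then converges to the pair of limits. -/
theorem statement_11
    {F : Type*} [Field F] [LinearOrder F] [IsStrictOrderedRing F] [TopologicalSpace F] [OrderTopology F]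
    (L : FirstOrder.Language) [L.Structure F]
    (hfield : IsOrderedFieldExpansion (F := F) L)
    (hdc : DefinablyComplete (F := F) L)
    (hlo : LocallyOMinimal (F := F) L)
    {m : ℕ} (X : Set (Fin m → F)) (E : Set (Fin m ⊕ Fin m → F))
    (hXdef : IsDef L X) (hE : IsDefEquivOn L X E)
    (hEproper : IsDefProper L E X (fun v => v ∘ Sum.inl))
    (ε : F) (hε : 0 < ε) (γ : F → (Fin m ⊕ Fin m → F)) (hγ : IsDefCurve L ε E γ)
    (hc : Completable ε X (fun t => γ t ∘ Sum.inl) ∨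
          Completable ε X (fun t => γ t ∘ Sum.inr)) :
    (Completable ε X (fun t => γ t ∘ Sum.inl) ∧
     Completable ε X (fun t => γ t ∘ Sum.inr)) ∧
    ∀ p q : Fin m → F, CurveTendsto ε (fun t => γ t ∘ Sum.inl) p →
      CurveTendsto ε (fun t => γ t ∘ Sum.inr) q →
      CurveTendsto ε γ (Sum.elim p q) :=
  statement_11_general L hfield hdc hlo X E hE hEproper ε hε γ hγ hc
end

section
/- Consider a definably complete locally o-minimal expansion 𝓕 = (F, <, +, ·, 0, 1, …) of an ordered field. Let K be a bounded closed definable set and f : K → F a locally bounded definable function (not necessarily continuous). Then f is bounded. -/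
open FirstOrder Set Topology Filter

/-!
If `f` were unbounded, the sets `{x ∈ K | t ≤ |f x|}` would form a decreasing definable family
of nonempty subsets of the bounded set `K`. Definable completeness makes such a nest shrink to a
point coordinate by coordinate: for the `i`-th coordinate take the infimum `c` of the levels `r`
such that every member of the nest meets `{y | y i ≤ r}`, and cut the `t`-th member down to
`y i ≤ c + 1/t`. The limit point lies in the closure of every member, hence in `K`, and `f` is
unbounded on every neighbourhood of it, contradicting local boundedness.
-/

section DefinableArith

variable {F : Type*} {L : FirstOrder.Language} [L.Structure F] {α : Type} {f g : (α → F) → F}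

lemma isDef_setOf_lt [LT F] (hlt : IsDef L {v : Fin 2 → F | v 0 < v 1})
    (hf : (univ : Set F).DefinableFun L f) (hg : (univ : Set F).DefinableFun L g) :
    IsDef L {v | f v < g v} :=
  hlt.preimage_map (F := fun v => ![f v, g v]) (by simp [DefinableMap, *])

lemma isDef_setOf_le [LinearOrder F] (hlt : IsDef L {v : Fin 2 → F | v 0 < v 1})
    (hf : (univ : Set F).DefinableFun L f) (hg : (univ : Set F).DefinableFun L g) :
    IsDef L {v | f v ≤ g v} := by
  simpa only [IsDef, compl_ofPred, not_lt] using (isDef_setOf_lt hlt hg hf).compl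

lemma definableFun_add [Add F] (hadd : IsDef L {v : Fin 3 → F | v 0 + v 1 = v 2})
    (hf : (univ : Set F).DefinableFun L f) (hg : (univ : Set F).DefinableFun L g) :
    (univ : Set F).DefinableFun L fun v => f v + g v := by
  have hsum : (univ : Set F).DefinableFun L fun w : Fin 2 → F => w 0 + w 1 :=
    hadd.preimage_comp ![some 0, some 1, none]
  exact hsum.comp (g := fun v => ![f v, g v]) (by simp [DefinableMap, *])

lemma definableFun_mul [Mul F] (hmul : IsDef L {v : Fin 3 → F | v 0 * v 1 = v 2})
    (hf : (univ : Set F).DefinableFun L f) (hg : (univ : Set F).DefinableFun L g) :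
    (univ : Set F).DefinableFun L fun v => f v * g v := by
  have hprod : (univ : Set F).DefinableFun L fun w : Fin 2 → F => w 0 * w 1 :=
    hmul.preimage_comp ![some 0, some 1, none]
  exact hprod.comp (g := fun v => ![f v, g v]) (by simp [DefinableMap, *])

end DefinableArith

lemma IsBdd.mono {F : Type*} [LE F] {α : Type} {s t : Set (α → F)} (h : IsBdd s) (hts : t ⊆ s) :
    IsBdd t :=
  let ⟨a, b, hab⟩ := h
  ⟨a, b, fun v hv => hab v (hts hv)⟩

lemma tendsto_smallSets_nhds_pi_iff {α ι X : Type*} [TopologicalSpace X] {l : Filter α}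
    {s : α → Set (ι → X)} {x : ι → X} :
    Tendsto s l (𝓝 x).smallSets ↔ ∀ i, Tendsto (fun a => (· i) '' s a) l (𝓝 (x i)).smallSets := by
  simp only [nhds_pi, Filter.pi, smallSets_iInf, tendsto_iInf, smallSets_comap_eq_comap_image,
    tendsto_comap_iff]
  rfl

section Family

variable {F : Type*} {L : FirstOrder.Language} [L.Structure F] {m : ℕ}

def IsDefFamily (L : FirstOrder.Language) [L.Structure F] (C : F → Set (Fin m → F)) : Prop :=
  IsDef L {v : Unit ⊕ Fin m → F | v ∘ Sum.inr ∈ C (v (Sum.inl ()))}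

lemma IsDefFamily.isDef_setOf_comp_mem {C : F → Set (Fin m → F)} (hC : IsDefFamily L C)
    {α : Type} (t : α) (y : Fin m → α) : IsDef L {v : α → F | v ∘ y ∈ C (v t)} :=
  hC.preimage_comp (Sum.elim (fun _ => t) y)

lemma IsDefFamily.isDef_setOf_forall_exists_le [LinearOrder F]
    (hlt : IsDef L {v : Fin 2 → F | v 0 < v 1}) {C : F → Set (Fin m → F)} (hC : IsDefFamily L C)
    (i : Fin m) : IsDef L {v : Fin 1 → F | ∀ t, ∃ y ∈ C t, y i ≤ v 0} := by
  have h : IsDef L {w : (Fin 1 ⊕ Unit) ⊕ Fin m → F |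
      w ∘ Sum.inr ∈ C (w (Sum.inl (Sum.inr ()))) ∧ w (Sum.inr i) ≤ w (Sum.inl (Sum.inl 0))} :=
    (hC.isDef_setOf_comp_mem _ _).inter
      (isDef_setOf_le hlt (DefinableFun.proj L) (DefinableFun.proj L))
  have h' : IsDef L _ := h.exists_of_finite.forall_of_finite
  convert h' using 1
  ext v
  simp [(Equiv.funUnique Unit F).forall_congr_left]

lemma IsDefFunOn₁.isDefFamily_setOf_le_abs [Field F] [LinearOrder F] [IsStrictOrderedRing F]
    (hfield : IsOrderedFieldExpansion (F := F) L) {K : Set (Fin m → F)} {f : (Fin m → F) → F}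
    (hf : IsDefFunOn₁ L K f) : IsDefFamily L fun t => {x ∈ K | t ≤ |f x|} := by
  obtain ⟨hlt, hadd, -⟩ := hfield
  have hgraph : IsDef L {w : (Unit ⊕ Fin m) ⊕ Unit → F |
      w ∘ Sum.inl ∘ Sum.inr ∈ K ∧ f (w ∘ Sum.inl ∘ Sum.inr) = w (Sum.inr ())} :=
    hf.preimage_comp (Sum.map Sum.inr id)
  have hle : IsDef L {w : (Unit ⊕ Fin m) ⊕ Unit → F | w (Sum.inl (Sum.inl ())) ≤ w (Sum.inr ()) ∨
      w (Sum.inl (Sum.inl ())) + w (Sum.inr ()) ≤ 0} :=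
    (isDef_setOf_le hlt (DefinableFun.proj L) (DefinableFun.proj L)).union
      (isDef_setOf_le hlt (definableFun_add hadd (DefinableFun.proj L) (DefinableFun.proj L))
        (L.definableFun_const _ (mem_univ 0)))
  have h : IsDef L _ := (hgraph.inter hle).exists_of_finite
  unfold IsDefFamily
  convert h using 1
  ext v
  simp only [le_abs, le_neg_iff_add_nonpos_right, Function.comp_def, mem_ofPred_eq,
    mem_inter_iff, Sum.elim_inl, Sum.elim_inr, and_assoc,
    (Equiv.funUnique Unit F).exists_congr_left, Equiv.funUnique_symm_apply, uniqueElim_const,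
    exists_and_left, existsAndEq, true_and]

end Family

section Nest

variable {F : Type*} [Field F] [LinearOrder F] [IsStrictOrderedRing F] [TopologicalSpace F]
  [OrderTopology F] {L : FirstOrder.Language} [L.Structure F] {m : ℕ}

structure IsDefNest (L : FirstOrder.Language) [L.Structure F] (C : F → Set (Fin m → F)) :
    Prop where
  isDefFamily : IsDefFamily L C
  antitone : Antitone C
  nonempty : ∀ t, (C t).Nonempty

lemma IsDefNest.exists_subnest_tendsto_coord
    (hfield : IsOrderedFieldExpansion (F := F) L) (hdc : DefinablyComplete (F := F) L)
    {C : F → Set (Fin m → F)} (hC : IsDefNest L C)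
    (hbdd : IsBdd (⋃ t, C t)) (i : Fin m) :
    ∃ C' : F → Set (Fin m → F), IsDefNest L C' ∧ (∀ t, C' t ⊆ C t) ∧
      ∃ c, Tendsto (fun t => (· i) '' C' t) atTop (𝓝 c).smallSets := by
  obtain ⟨hlt, hadd, hmul⟩ := hfield
  obtain ⟨a, b, hab⟩ := hbdd
  set R := {r : F | ∀ t, ∃ y ∈ C t, y i ≤ r}
  have hbR : b ∈ R := fun t =>
    (hC.nonempty t).imp fun y hy => ⟨hy, (hab y (mem_iUnion_of_mem t hy) i).2⟩
  have haR : a ∈ lowerBounds R := fun r hr => by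
    obtain ⟨y, hy, hyr⟩ := hr 0
    exact (hab y (mem_iUnion_of_mem 0 hy) i).1.trans hyr
  obtain ⟨c, hc⟩ :=
    (hdc R (hC.isDefFamily.isDef_setOf_forall_exists_le hlt i) ⟨b, hbR⟩).2 ⟨a, haR⟩
  -- For `t > 0` the condition says `y i ≤ c + t⁻¹`; the first disjunct and the division-free
  -- form keep the family antitone and nonempty for `t ≤ 0` as well.
  set C' : F → Set (Fin m → F) := fun t => {y ∈ C t | y i ≤ c ∨ t * y i ≤ t * c + 1}
  have hdef : IsDefFamily L C' :=
    hC.isDefFamily.inter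
      ((isDef_setOf_le hlt (DefinableFun.proj L) (L.definableFun_const _ (mem_univ c))).union
      (isDef_setOf_le hlt (definableFun_mul hmul (DefinableFun.proj L) (DefinableFun.proj L))
        (definableFun_add hadd
          (definableFun_mul hmul (DefinableFun.proj L) (L.definableFun_const _ (mem_univ c)))
          (L.definableFun_const _ (mem_univ 1)))))
  have hanti : Antitone C' := by
    rintro s t hst y ⟨hy, hyc⟩
    refine ⟨hC.antitone hst hy, ?_⟩
    rcases le_or_gt (y i) c with h | h
    · exact Or.inl h
    · have := hyc.resolve_left h.not_ge
      exact Or.inr (by nlinarith)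
  have hpos : ∀ t, 0 < t → (C' t).Nonempty := by
    intro t ht
    obtain ⟨r, hr, -, hrt⟩ := hc.exists_between (lt_add_of_pos_right c (inv_pos.2 ht))
    obtain ⟨y, hy, hyr⟩ := hr t
    refine ⟨y, hy, Or.inr ?_⟩
    calc t * y i ≤ t * (c + t⁻¹) := by gcongr; exact hyr.trans hrt.le
      _ = t * c + 1 := by rw [mul_add, mul_inv_cancel₀ ht.ne']
  refine ⟨C', ⟨hdef, hanti, fun t => (hpos _ (lt_max_of_lt_right one_pos)).mono
    (hanti (le_max_left t 1))⟩, fun t => sep_subset _ _, c, tendsto_smallSets_iff.2 ?_⟩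
  intro U hU
  obtain ⟨l, u, ⟨hlc, hcu⟩, hlu⟩ := mem_nhds_iff_exists_Ioo_subset.1 hU
  have hlR : l ∉ R := fun hl => (hc.1 hl).not_gt hlc
  simp only [R, mem_ofPred_eq, not_forall, not_exists, not_and, not_le] at hlR
  obtain ⟨t₁, ht₁⟩ := hlR
  filter_upwards [eventually_ge_atTop t₁, eventually_gt_atTop (u - c)⁻¹] with t htt₁ htu
  rintro _ ⟨y, ⟨hy, hyc⟩, rfl⟩
  refine hlu ⟨ht₁ y (hC.antitone htt₁ hy), ?_⟩
  rcases hyc with h | h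
  · exact h.trans_lt hcu
  · rw [inv_lt_iff_one_lt_mul₀ (sub_pos.2 hcu)] at htu
    nlinarith

lemma IsDefNest.exists_subnest_tendsto
    (hfield : IsOrderedFieldExpansion (F := F) L) (hdc : DefinablyComplete (F := F) L)
    {C : F → Set (Fin m → F)} (hC : IsDefNest L C)
    (hbdd : IsBdd (⋃ t, C t)) :
    ∃ C' : F → Set (Fin m → F), IsDefNest L C' ∧ (∀ t, C' t ⊆ C t) ∧
      ∃ x, Tendsto C' atTop (𝓝 x).smallSets := by
  suffices ∀ S : Finset (Fin m), ∃ C' : F → Set (Fin m → F), IsDefNest L C' ∧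
      (∀ t, C' t ⊆ C t) ∧ ∀ i ∈ S, ∃ c, Tendsto (fun t => (· i) '' C' t) atTop (𝓝 c).smallSets by
    obtain ⟨C', hC', hC'C, hconv⟩ := this Finset.univ
    choose x hx using fun i => hconv i (Finset.mem_univ i)
    exact ⟨C', hC', hC'C, x, tendsto_smallSets_nhds_pi_iff.2 hx⟩
  intro S
  induction S using Finset.induction_on with
  | empty => exact ⟨C, hC, fun _ => subset_rfl, by simp⟩
  | insert i S _ ih =>
    obtain ⟨C₁, hC₁, hC₁C, hS⟩ := ih
    obtain ⟨C₂, hC₂, hC₂C₁, c, hc⟩ :=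
      hC₁.exists_subnest_tendsto_coord hfield hdc (hbdd.mono (iUnion_mono hC₁C)) i
    refine ⟨C₂, hC₂, fun t => (hC₂C₁ t).trans (hC₁C t), fun j hj => ?_⟩
    rcases Finset.mem_insert.1 hj with rfl | hj
    · exact ⟨c, hc⟩
    · obtain ⟨c', hc'⟩ := hS j hj
      exact ⟨c', hc'.smallSets_mono (Eventually.of_forall fun t => image_mono (hC₂C₁ t))⟩

lemma IsDefNest.exists_forall_mem_closure
    (hfield : IsOrderedFieldExpansion (F := F) L) (hdc : DefinablyComplete (F := F) L)
    {C : F → Set (Fin m → F)} (hC : IsDefNest L C)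
    (hbdd : IsBdd (⋃ t, C t)) : ∃ x, ∀ t, x ∈ closure (C t) := by
  obtain ⟨C', hC', hC'C, x, hx⟩ := hC.exists_subnest_tendsto hfield hdc hbdd
  choose y hy using hC'.nonempty
  refine ⟨x, fun t => mem_closure_of_tendsto (hx.of_smallSets (Eventually.of_forall hy)) ?_⟩
  filter_upwards [eventually_ge_atTop t] with s hs using hC'C t (hC'.antitone hs (hy s))

end Nest

theorem statement_18_general
    {F : Type*} [Field F] [LinearOrder F] [IsStrictOrderedRing F] [TopologicalSpace F] [OrderTopology F]
    (L : FirstOrder.Language) [L.Structure F]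
    (hfield : IsOrderedFieldExpansion (F := F) L)
    (hdc : DefinablyComplete (F := F) L)
    {m : ℕ} (K : Set (Fin m → F))
    (hKclosed : IsClosed K) (hKbdd : IsBdd K)
    (f : (Fin m → F) → F) (hfdef : IsDefFunOn₁ L K f)
    (hloc : ∀ x ∈ K, ∃ U : Set (Fin m → F), IsDef L U ∧ U ⊆ K ∧ x ∈ U ∧ OpenIn K U ∧
      ∃ a b : F, ∀ u ∈ U, a ≤ f u ∧ f u ≤ b) :
    ∃ a b : F, ∀ x ∈ K, a ≤ f x ∧ f x ≤ b := by
  by_contra hunbdd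
  have hlarge : ∀ t, ∃ x ∈ K, t ≤ |f x| := fun t => by
    by_contra! h
    exact hunbdd ⟨-t, t, fun x hx => abs_le.1 (h x hx).le⟩
  have hD : IsDefNest L fun t => {x ∈ K | t ≤ |f x|} :=
    ⟨hfdef.isDefFamily_setOf_le_abs hfield, fun s t hst x hx => ⟨hx.1, hst.trans hx.2⟩, hlarge⟩
  obtain ⟨x, hx⟩ :=
    hD.exists_forall_mem_closure hfield hdc (hKbdd.mono (iUnion_subset fun t => sep_subset _ _))
  have hxK : x ∈ K := closure_minimal (sep_subset _ _) hKclosed (hx 0)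
  obtain ⟨U, -, -, hxU, ⟨V, hV, rfl⟩, a, b, hab⟩ := hloc x hxK
  obtain ⟨z, hzV, hzK, hz⟩ :=
    mem_closure_iff_nhds.1 (hx (max |a| |b| + 1)) V (hV.mem_nhds hxU.2)
  have hfz := hab z ⟨hzK, hzV⟩
  have := abs_le_max_abs_abs hfz.1 hfz.2
  linarith

/-- a locally bounded definable function on a closed bounded definable
set is bounded. -/
theorem statement_18
    {F : Type*} [Field F] [LinearOrder F] [IsStrictOrderedRing F] [TopologicalSpace F] [OrderTopology F]
    (L : FirstOrder.Language) [L.Structure F]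
    (hfield : IsOrderedFieldExpansion (F := F) L)
    (hdc : DefinablyComplete (F := F) L)
    (hlo : LocallyOMinimal (F := F) L)
    {m : ℕ} (K : Set (Fin m → F))
    (hKdef : IsDef L K) (hKclosed : IsClosed K) (hKbdd : IsBdd K)
    (f : (Fin m → F) → F) (hfdef : IsDefFunOn₁ L K f)
    (hloc : ∀ x ∈ K, ∃ U : Set (Fin m → F), IsDef L U ∧ U ⊆ K ∧ x ∈ U ∧ OpenIn K U ∧
      ∃ a b : F, ∀ u ∈ U, a ≤ f u ∧ f u ≤ b) :
    ∃ a b : F, ∀ x ∈ K, a ≤ f x ∧ f x ≤ b :=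
  statement_18_general L hfield hdc K hKclosed hKbdd f hfdef hloc
end
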